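/- arXiv:2511.03624 — 2 statements merged into one kernel-verified Lean document; each statement's English description precedes it below -/
import Mathlib

section
/- Let $0<r<s$ and let $u$ be continuously differentiable on an open neighborhood of the closed annulus $\{x\in\mathbb{R}^2 : r\le|x|\le s\}$. Define the circular averages $u^*(t) = \frac{1}{2\pi}\int_0^{2\pi} u(t\cos\theta, t\sin\theta)\,d\theta$ for $t\in[r,s]$. Then $\frac{1}{2}\int_{\{r<|x|<s\}} |\nabla u(x)|^2\,dx \;\ge\; \frac{\pi\,\big(u^*(s)-u^*(r)\big)^2}{\log s - \log r}$. (This is the neck energy lower bound used in the proof of the blow-up energy estimate.) -/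
/-!
Write `∂ₜu(t, θ)` for the derivative of `u` along the ray of angle `θ` at radius `t`. By the
fundamental theorem of calculus on each ray and Fubini,
`∫∫_{(r,s)×(-π,π)} ∂ₜu dt dθ = 2π (u*(s) - u*(r))`. Cauchy–Schwarz with weight `t` bounds the
square of this by `(∫∫ dt dθ / t) · ∫∫ t (∂ₜu)² dt dθ = 2π log (s / r) · ∫∫ t (∂ₜu)² dt dθ`,
and since `|∂ₜu| ≤ |∇u|`, the last integral is at most `∫_{r<|x|<s} |∇u|²` in polar coordinates.
-/

open MeasureTheory Real
open scoped ContDiff RealInnerProductSpace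

/-- The Euclidean plane. -/
abbrev E2 : Type := EuclideanSpace ℝ (Fin 2)

/-- The Euclidean Laplacian on the plane:
`Δ f = ∂²f/∂x₁² + ∂²f/∂x₂²`. -/
noncomputable def laplacian2 (f : E2 → ℝ) (x : E2) : ℝ :=
  ∑ i : Fin 2,
    fderiv ℝ (fun y => fderiv ℝ f y (EuclideanSpace.single i 1)) x (EuclideanSpace.single i 1)

open Set

theorem sq_integral_le_integral_inv_mul_integral_mul_sq {α : Type*} [MeasurableSpace α]
    {μ : Measure α} {w g : α → ℝ} (hw : ∀ᵐ x ∂μ, 0 < w x)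
    (hw_inv : Integrable (fun x => (w x)⁻¹) μ) (hg : Integrable g μ)
    (hwg : Integrable (fun x => w x * g x ^ 2) μ) :
    (∫ x, g x ∂μ) ^ 2 ≤ (∫ x, (w x)⁻¹ ∂μ) * ∫ x, w x * g x ^ 2 ∂μ := by
  -- `∫ w (g - c / w)²` is a nonnegative quadratic polynomial in `c`.
  have hquad : ∀ c : ℝ, 0 ≤ (∫ x, (w x)⁻¹ ∂μ) * (c * c) + (-2 * ∫ x, g x ∂μ) * c +
      ∫ x, w x * g x ^ 2 ∂μ := by
    intro c
    have hexpand : ∀ᵐ x ∂μ, w x * (g x - c / w x) ^ 2 =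
        (w x)⁻¹ * (c * c) + (-2 * g x) * c + w x * g x ^ 2 := by
      filter_upwards [hw] with x hx
      field_simp
      ring
    calc 0 ≤ ∫ x, w x * (g x - c / w x) ^ 2 ∂μ :=
          integral_nonneg_of_ae (hw.mono fun x hx => mul_nonneg hx.le (sq_nonneg _))
      _ = ∫ x, ((w x)⁻¹ * (c * c) + (-2 * g x) * c + w x * g x ^ 2) ∂μ := integral_congr_ae hexpand
      _ = _ := by
        rw [integral_add _ hwg, integral_add (hw_inv.mul_const _) ((hg.const_mul _).mul_const _),
          integral_mul_const, integral_mul_const, integral_const_mul]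
        exact (hw_inv.mul_const _).add ((hg.const_mul _).mul_const _)
  have hdiscrim := discrim_le_zero hquad
  rw [discrim] at hdiscrim
  nlinarith

theorem norm_gradient_eq_norm_fderiv {E : Type*} [NormedAddCommGroup E] [InnerProductSpace ℝ E]
    [CompleteSpace E] (u : E → ℝ) (x : E) : ‖gradient u x‖ = ‖fderiv ℝ u x‖ :=
  (InnerProductSpace.toDual ℝ E).symm.norm_map _

theorem Function.Periodic.setIntegral_Ioo_neg_pi_pi {f : ℝ → ℝ} (hf : Function.Periodic f (2 * π)) :
    ∫ θ in Ioo (-π) π, f θ = ∫ θ in (0 : ℝ)..2 * π, f θ := by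
  have h := hf.intervalIntegral_add_eq (-π) 0
  rw [zero_add, show -π + 2 * π = π by ring] at h
  rw [← h, intervalIntegral.integral_of_le (by linarith [pi_pos]), integral_Ioc_eq_integral_Ioo]

theorem setIntegral_inv_fst_Ioo_prod_Ioo {r s : ℝ} (hr : 0 < r) (hrs : r ≤ s) :
    ∫ p in Ioo r s ×ˢ Ioo (-π) π, p.1⁻¹ = (Real.log s - Real.log r) * (2 * π) := by
  have h := setIntegral_prod_mul (μ := volume) (ν := volume) (fun t : ℝ => t⁻¹)
    (fun _ : ℝ => (1 : ℝ)) (Ioo r s) (Ioo (-π) π)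
  simp only [mul_one, ← Measure.volume_eq_prod] at h
  rw [h, ← integral_Ioc_eq_integral_Ioo, ← intervalIntegral.integral_of_le hrs,
    integral_inv_of_pos hr (hr.trans_le hrs), Real.log_div (hr.trans_le hrs).ne' hr.ne',
    setIntegral_const, volume_real_Ioo_of_le (by linarith [pi_pos]), smul_eq_mul, mul_one]
  ring

theorem integrableOn_Ioo_prod_Ioo_neg_pi_pi {r s : ℝ} {F : ℝ × ℝ → ℝ}
    (hF : ContinuousOn F (Icc r s ×ˢ univ)) : IntegrableOn F (Ioo r s ×ˢ Ioo (-π) π) :=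
  ((hF.mono (prod_mono subset_rfl (subset_univ _))).integrableOn_compact
    (isCompact_Icc.prod isCompact_Icc)).mono_set (prod_mono Ioo_subset_Icc_self Ioo_subset_Icc_self)

noncomputable def prodToE2 : ℝ × ℝ ≃ᵐ E2 :=
  MeasurableEquiv.finTwoArrow.symm.trans (MeasurableEquiv.toLp 2 (Fin 2 → ℝ))

theorem measurePreserving_prodToE2 : MeasurePreserving prodToE2 :=
  (EuclideanSpace.volume_preserving_symm_measurableEquiv_toLp (Fin 2)).symm.comp
    (volume_preserving_finTwoArrow ℝ).symm

theorem continuous_prodToE2 : Continuous prodToE2 :=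
  (PiLp.continuous_toLp 2 _).comp (Homeomorph.finTwoArrow (X := ℝ)).symm.continuous

theorem norm_prodToE2 (p : ℝ × ℝ) : ‖prodToE2 p‖ = √(p.1 ^ 2 + p.2 ^ 2) := by
  simp [prodToE2, EuclideanSpace.norm_eq, Fin.sum_univ_two, MeasurableEquiv.finTwoArrow]

/-- Definitionally `(WithLp.equiv 2 _).symm ![t * cos θ, t * sin θ]` for `p = (t, θ)`. -/
noncomputable def polarPoint (p : ℝ × ℝ) : E2 := prodToE2 (polarCoord.symm p)

theorem continuous_polarPoint : Continuous polarPoint :=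
  continuous_prodToE2.comp continuous_polarCoord_symm

theorem norm_polarPoint {t : ℝ} (ht : 0 ≤ t) (θ : ℝ) : ‖polarPoint (t, θ)‖ = t := by
  rw [polarPoint, norm_prodToE2, polarCoord_symm_apply, mul_pow, mul_pow, ← mul_add,
    cos_sq_add_sin_sq, mul_one, sqrt_sq ht]

theorem polarPoint_add_two_pi (t θ : ℝ) : polarPoint (t, θ + 2 * π) = polarPoint (t, θ) := by
  simp only [polarPoint, polarCoord_symm_apply, cos_add_two_pi, sin_add_two_pi]

theorem polarPoint_eq_smul (t θ : ℝ) : polarPoint (t, θ) = t • polarPoint (1, θ) := by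
  change WithLp.toLp 2 ![t * cos θ, t * sin θ] = t • WithLp.toLp 2 ![1 * cos θ, 1 * sin θ]
  rw [← WithLp.toLp_smul, one_mul, one_mul, Matrix.smul_cons, Matrix.smul_cons, Matrix.smul_empty,
    smul_eq_mul, smul_eq_mul]

theorem hasDerivAt_polarPoint_radius (t θ : ℝ) :
    HasDerivAt (fun t => polarPoint (t, θ)) (polarPoint (1, θ)) t := by
  rw [show (fun t => polarPoint (t, θ)) = fun t => t • polarPoint (1, θ) from
    funext fun t => polarPoint_eq_smul t θ]
  simpa using (hasDerivAt_id t).smul_const (polarPoint (1, θ))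

theorem mapsTo_polarPoint_closedAnnulus {r s : ℝ} (hr : 0 ≤ r) :
    MapsTo polarPoint (Icc r s ×ˢ univ) {x | r ≤ ‖x‖ ∧ ‖x‖ ≤ s} := by
  rintro ⟨t, θ⟩ ⟨ht, -⟩
  rw [mem_ofPred_eq, norm_polarPoint (hr.trans ht.1)]
  exact ht

theorem integral_comp_polarPoint (f : E2 → ℝ) :
    ∫ p in polarCoord.target, p.1 * f (polarPoint p) = ∫ x, f x := by
  rw [← measurePreserving_prodToE2.integral_comp' f, ← integral_comp_polarCoord_symm]
  rfl

theorem setIntegral_annulus_eq_polar (f : E2 → ℝ) {r : ℝ} (hr : 0 ≤ r) (s : ℝ) :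
    ∫ x in {x : E2 | r < ‖x‖ ∧ ‖x‖ < s}, f x =
      ∫ p in Ioo r s ×ˢ Ioo (-π) π, p.1 * f (polarPoint p) := by
  set A : Set E2 := {x | r < ‖x‖ ∧ ‖x‖ < s}
  have hA : IsOpen A := isOpen_Ioo.preimage continuous_norm
  have hQ : polarCoord.target ∩ polarPoint ⁻¹' A = Ioo r s ×ˢ Ioo (-π) π := by
    ext ⟨t, θ⟩
    simp only [polarCoord_target, mem_inter_iff, mem_prod, mem_preimage, mem_ofPred_eq, A]
    constructor
    · rintro ⟨⟨ht, hθ⟩, htA⟩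
      rw [norm_polarPoint ht.le] at htA
      exact ⟨htA, hθ⟩
    · rintro ⟨htA, hθ⟩
      have ht : 0 < t := hr.trans_lt htA.1
      rw [norm_polarPoint ht.le]
      exact ⟨⟨ht, hθ⟩, htA⟩
  rw [← integral_indicator hA.measurableSet, ← integral_comp_polarPoint, ← hQ,
    ← setIntegral_indicator (hA.preimage continuous_polarPoint).measurableSet]
  congr 1 with p
  rw [← indicator_comp_right, indicator_mul_right]
  rfl

section RadialDerivative

noncomputable def radialDeriv (u : E2 → ℝ) (p : ℝ × ℝ) : ℝ :=
  fderiv ℝ u (polarPoint p) (polarPoint (1, p.2))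

theorem abs_radialDeriv_le (u : E2 → ℝ) (p : ℝ × ℝ) :
    |radialDeriv u p| ≤ ‖fderiv ℝ u (polarPoint p)‖ := by
  rw [radialDeriv]
  simpa [norm_polarPoint zero_le_one] using
    (fderiv ℝ u (polarPoint p)).le_opNorm (polarPoint (1, p.2))

variable {u : E2 → ℝ} {U : Set E2} {r s : ℝ} (hr : 0 ≤ r) (hU : IsOpen U)
  (hsub : {x : E2 | r ≤ ‖x‖ ∧ ‖x‖ ≤ s} ⊆ U) (hu : ContDiffOn ℝ 1 u U)
include hr hU hsub hu

theorem continuousOn_fderiv_comp_polarPoint :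
    ContinuousOn (fun p => fderiv ℝ u (polarPoint p)) (Icc r s ×ˢ univ) :=
  (hu.continuousOn_fderiv_of_isOpen hU le_rfl).comp continuous_polarPoint.continuousOn
    ((mapsTo_polarPoint_closedAnnulus hr).mono_right hsub)

theorem continuousOn_radialDeriv : ContinuousOn (radialDeriv u) (Icc r s ×ˢ univ) :=
  (continuousOn_fderiv_comp_polarPoint hr hU hsub hu).clm_apply
    (continuous_polarPoint.comp (continuous_const.prodMk continuous_snd)).continuousOn

theorem integral_radialDeriv (hrs : r ≤ s) (θ : ℝ) :
    ∫ t in r..s, radialDeriv u (t, θ) = u (polarPoint (s, θ)) - u (polarPoint (r, θ)) := by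
  have hray : MapsTo (fun t => (t, θ)) (uIcc r s) (Icc r s ×ˢ univ) := fun t ht =>
    ⟨uIcc_of_le hrs ▸ ht, mem_univ θ⟩
  have hcont : ContinuousOn (fun t => radialDeriv u (t, θ)) (uIcc r s) :=
    (continuousOn_radialDeriv hr hU hsub hu).comp
      (continuous_id.prodMk continuous_const).continuousOn hray
  refine intervalIntegral.integral_eq_sub_of_hasDerivAt (f := fun t => u (polarPoint (t, θ)))
    (fun t ht => ?_) hcont.intervalIntegrable
  have hx : polarPoint (t, θ) ∈ U := hsub (mapsTo_polarPoint_closedAnnulus hr (hray ht))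
  exact ((hu.differentiableOn one_ne_zero).differentiableAt
    (hU.mem_nhds hx)).hasFDerivAt.comp_hasDerivAt t (hasDerivAt_polarPoint_radius t θ)

theorem setIntegral_radialDeriv (hrs : r ≤ s) :
    ∫ p in Ioo r s ×ˢ Ioo (-π) π, radialDeriv u p =
      (∫ θ in (0 : ℝ)..2 * π, u (polarPoint (s, θ))) -
        ∫ θ in (0 : ℝ)..2 * π, u (polarPoint (r, θ)) := by
  have hint : Integrable (radialDeriv u)
      ((volume.restrict (Ioo r s)).prod (volume.restrict (Ioo (-π) π))) := by
    rw [Measure.prod_restrict, ← Measure.volume_eq_prod]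
    exact integrableOn_Ioo_prod_Ioo_neg_pi_pi (continuousOn_radialDeriv hr hU hsub hu)
  have hcircle (t : ℝ) (ht : t ∈ Icc r s) : Continuous fun θ => u (polarPoint (t, θ)) :=
    hu.continuousOn.comp_continuous (continuous_polarPoint.comp (by fun_prop))
      fun θ => hsub (mapsTo_polarPoint_closedAnnulus hr ⟨ht, mem_univ θ⟩)
  rw [Measure.volume_eq_prod, ← Measure.prod_restrict, integral_prod_symm (radialDeriv u) hint]
  calc ∫ θ in Ioo (-π) π, ∫ t in Ioo r s, radialDeriv u (t, θ)
      = ∫ θ in Ioo (-π) π, (u (polarPoint (s, θ)) - u (polarPoint (r, θ))) := by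
        congr 1 with θ
        rw [← integral_radialDeriv hr hU hsub hu hrs, intervalIntegral.integral_of_le hrs,
          integral_Ioc_eq_integral_Ioo]
    _ = ∫ θ in (0 : ℝ)..2 * π, (u (polarPoint (s, θ)) - u (polarPoint (r, θ))) :=
        Function.Periodic.setIntegral_Ioo_neg_pi_pi fun θ => by simp only [polarPoint_add_two_pi]
    _ = _ := intervalIntegral.integral_sub
        ((hcircle s (right_mem_Icc.2 hrs)).intervalIntegrable _ _)
        ((hcircle r (left_mem_Icc.2 hrs)).intervalIntegrable _ _)

theorem setIntegral_mul_radialDeriv_sq_le :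
    ∫ p in Ioo r s ×ˢ Ioo (-π) π, p.1 * radialDeriv u p ^ 2 ≤
      ∫ x in {x : E2 | r < ‖x‖ ∧ ‖x‖ < s}, ‖gradient u x‖ ^ 2 := by
  have hfderiv := continuousOn_fderiv_comp_polarPoint hr hU hsub hu
  rw [setIntegral_annulus_eq_polar (fun x => ‖gradient u x‖ ^ 2) hr]
  simp only [norm_gradient_eq_norm_fderiv]
  refine setIntegral_mono_on (integrableOn_Ioo_prod_Ioo_neg_pi_pi
      (continuous_fst.continuousOn.mul ((continuousOn_radialDeriv hr hU hsub hu).pow 2)))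
    (integrableOn_Ioo_prod_Ioo_neg_pi_pi (continuous_fst.continuousOn.mul (hfderiv.norm.pow 2)))
    (measurableSet_Ioo.prod measurableSet_Ioo) fun p hp => ?_
  have ht : 0 ≤ p.1 := hr.trans hp.1.1.le
  rw [← sq_abs]
  gcongr
  exact abs_radialDeriv_le u p

end RadialDerivative

theorem stmt7 (r s : ℝ) (hr : 0 < r) (hrs : r < s)
    (u : E2 → ℝ) (U : Set E2) (hU : IsOpen U)
    (hsub : {x : E2 | r ≤ ‖x‖ ∧ ‖x‖ ≤ s} ⊆ U)
    (hu : ContDiffOn ℝ 1 u U)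
    (ustar : ℝ → ℝ)
    (hustar : ∀ t : ℝ, ustar t =
      (1 / (2 * π)) * ∫ θ in (0 : ℝ)..(2 * π),
        u ((WithLp.equiv 2 (Fin 2 → ℝ)).symm ![t * Real.cos θ, t * Real.sin θ])) :
    π * (ustar s - ustar r) ^ 2 / (Real.log s - Real.log r) ≤
      (1 / 2) * ∫ x in {x : E2 | r < ‖x‖ ∧ ‖x‖ < s}, ‖gradient u x‖ ^ 2 := by
  have hlog : 0 < Real.log s - Real.log r := sub_pos.2 (Real.log_lt_log hr hrs)
  have hQ : MeasurableSet (Ioo r s ×ˢ Ioo (-π) π) := measurableSet_Ioo.prod measurableSet_Ioo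
  have hradial := continuousOn_radialDeriv hr.le hU hsub hu
  have hmean (t : ℝ) : ∫ θ in (0 : ℝ)..2 * π, u (polarPoint (t, θ)) = 2 * π * ustar t := by
    rw [hustar t, ← mul_assoc, mul_one_div_cancel two_pi_pos.ne', one_mul]
    rfl
  have hCS := sq_integral_le_integral_inv_mul_integral_mul_sq
    (μ := volume.restrict (Ioo r s ×ˢ Ioo (-π) π)) (w := Prod.fst) (g := radialDeriv u)
    ((ae_restrict_mem hQ).mono fun p hp => hr.trans hp.1.1)
    (integrableOn_Ioo_prod_Ioo_neg_pi_pi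
      (continuous_fst.continuousOn.inv₀ fun p hp => (hr.trans_le hp.1.1).ne'))
    (integrableOn_Ioo_prod_Ioo_neg_pi_pi hradial)
    (integrableOn_Ioo_prod_Ioo_neg_pi_pi (continuous_fst.continuousOn.mul (hradial.pow 2)))
  rw [setIntegral_radialDeriv hr.le hU hsub hu hrs.le, hmean, hmean,
    setIntegral_inv_fst_Ioo_prod_Ioo hr hrs.le] at hCS
  have hkey := hCS.trans (mul_le_mul_of_nonneg_left
    (setIntegral_mul_radialDeriv_sq_le hr.le hU hsub hu) (by positivity))
  rw [div_le_iff₀ hlog]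
  nlinarith [pi_pos]
end

section
/- There is no function $v:\mathbb{R}^2\to\mathbb{R}$ that is harmonic on all of $\mathbb{R}^2$ (twice continuously differentiable with $\Delta v \equiv 0$) and satisfies $\int_{\mathbb{R}^2} e^{v(x)}\,dx < \infty$. (Used in the blow-up analysis to derive a contradiction when the limiting equation degenerates to a harmonic one.) -/
open MeasureTheory Real
open scoped ContDiff RealInnerProductSpace

/-!
A harmonic function `v` on the plane is the real part of an entire function `F`, so
`‖exp ∘ F‖ = exp ∘ v`. An integrable entire function `g` vanishes: by the mean value property
`2π r ‖g z‖` is at most the integral of `‖g‖` over the circle of radius `r` about `z`, and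
integrating this in polar coordinates over all `r > 0` gives `∫ ‖g‖ = ∞` unless `g z = 0`.
Since `exp ∘ F` has no zeros, `exp ∘ v` cannot be integrable.
-/

open Set InnerProductSpace Laplacian

section LaplacianComp

variable {E F G : Type*} [NormedAddCommGroup E] [InnerProductSpace ℝ E] [FiniteDimensional ℝ E]
  [NormedAddCommGroup F] [InnerProductSpace ℝ F] [FiniteDimensional ℝ F]
  [NormedAddCommGroup G] [NormedSpace ℝ G]

theorem laplacian_comp_linearIsometryEquiv (e : E ≃ₗᵢ[ℝ] F) (f : F → G) :
    Δ (f ∘ e) = Δ f ∘ e := by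
  ext x
  have hcomp := e.toContinuousLinearEquiv.iteratedFDerivWithin_comp_right f uniqueDiffOn_univ
    (mem_univ (e x)) 2
  simp only [preimage_univ, iteratedFDerivWithin_univ] at hcomp
  rw [laplacian_eq_iteratedFDeriv_stdOrthonormalBasis, Function.comp_apply,
    laplacian_eq_iteratedFDeriv_orthonormalBasis f ((stdOrthonormalBasis ℝ E).map e)]
  refine Finset.sum_congr rfl fun i _ => ?_
  rw [show f ∘ e = f ∘ e.toContinuousLinearEquiv from rfl, hcomp,
    ContinuousMultilinearMap.compContinuousLinearMap_apply]
  congr 1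
  ext j
  fin_cases j <;> rfl

end LaplacianComp

theorem laplacian2_eq_laplacian {f : E2 → ℝ} (hf : ContDiff ℝ 2 f) : laplacian2 f = Δ f := by
  ext x
  rw [laplacian_eq_iteratedFDeriv_orthonormalBasis f (EuclideanSpace.basisFun (Fin 2) ℝ),
    laplacian2]
  refine Finset.sum_congr rfl fun i _ => ?_
  rw [iteratedFDeriv_two_apply, fderiv_clm_apply]
  · simp
  · exact (hf.fderiv_right (m := 1) le_rfl).differentiable one_ne_zero x
  · fun_prop

theorem Complex.polarCoord_symm_eq_circleMap (r θ : ℝ) :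
    Complex.polarCoord.symm (r, θ) = circleMap 0 r θ := by
  simp [circleMap, Complex.exp_mul_I]

theorem setIntegral_Ioo_polarCoord_symm_eq_two_pi_smul_circleAverage {E : Type*}
    [NormedAddCommGroup E] [NormedSpace ℝ E] (f : ℂ → E) (r : ℝ) :
    ∫ θ in Ioo (-π) π, f (Complex.polarCoord.symm (r, θ)) = (2 * π) • circleAverage f 0 r := by
  have hper : Function.Periodic (fun θ => f (circleMap 0 r θ)) (2 * π) :=
    fun θ => congrArg f (periodic_circleMap 0 r θ)
  have hshift := hper.intervalIntegral_add_eq (-π) 0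
  rw [show -π + 2 * π = π by ring, zero_add] at hshift
  simp_rw [Complex.polarCoord_symm_eq_circleMap]
  rw [← integral_Ioc_eq_integral_Ioo, ← intervalIntegral.integral_of_le (by linarith [pi_pos]),
    hshift, circleAverage_def, smul_inv_smul₀ (by positivity)]

theorem lintegral_Ioi_zero_ofReal_eq_top : ∫⁻ r in Ioi (0 : ℝ), ENNReal.ofReal r = ⊤ := by
  refine top_le_iff.1 ?_
  calc ⊤ = ∫⁻ _ in Ioi (1 : ℝ), 1 := by simp
    _ ≤ ∫⁻ r in Ioi (1 : ℝ), ENNReal.ofReal r :=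
      setLIntegral_mono measurable_id.ennreal_ofReal fun r hr => by simpa using hr.le
    _ ≤ ∫⁻ r in Ioi (0 : ℝ), ENNReal.ofReal r := lintegral_mono_set (Ioi_subset_Ioi zero_le_one)

section IntegrableEntire

variable {E : Type*} [NormedAddCommGroup E] [NormedSpace ℂ E] [CompleteSpace E]

theorem Differentiable.lintegral_enorm_eq_top {g : ℂ → E} (hg : Differentiable ℂ g)
    (h0 : g 0 ≠ 0) : ∫⁻ z, ‖g z‖ₑ = ⊤ := by
  have hmean : ∀ r, ∫ θ in Ioo (-π) π, g (Complex.polarCoord.symm (r, θ)) = (2 * π) • g 0 :=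
    fun r => by
      rw [setIntegral_Ioo_polarCoord_symm_eq_two_pi_smul_circleAverage,
        hg.diffContOnCl.circleAverage]
  have hmeas : Measurable fun p : ℝ × ℝ => ENNReal.ofReal p.1 * ‖g (Complex.polarCoord.symm p)‖ₑ :=
    measurable_fst.ennreal_ofReal.mul (continuous_enorm.comp (hg.continuous.comp
      (show Continuous fun p : ℝ × ℝ => Complex.polarCoord.symm p by
        simp only [Complex.polarCoord_symm_apply]; fun_prop))).measurable
  refine top_le_iff.1 ?_
  calc ⊤ = ‖(2 * π : ℝ) • g 0‖ₑ * ∫⁻ r in Ioi 0, ENNReal.ofReal r := by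
        rw [lintegral_Ioi_zero_ofReal_eq_top, ENNReal.mul_top (by simpa [pi_ne_zero] using h0)]
    _ = ∫⁻ r in Ioi 0, ENNReal.ofReal r * ‖(2 * π : ℝ) • g 0‖ₑ := by
        rw [← lintegral_const_mul' _ _ enorm_ne_top]
        simp_rw [mul_comm]
    _ ≤ ∫⁻ r in Ioi 0, ENNReal.ofReal r *
          ∫⁻ θ in Ioo (-π) π, ‖g (Complex.polarCoord.symm (r, θ))‖ₑ := by
        gcongr with r
        rw [← hmean r]
        exact enorm_integral_le_lintegral_enorm _
    _ = ∫⁻ r in Ioi 0, ∫⁻ θ in Ioo (-π) π,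
          ENNReal.ofReal r * ‖g (Complex.polarCoord.symm (r, θ))‖ₑ := by
        simp_rw [lintegral_const_mul' _ _ ENNReal.ofReal_ne_top]
    _ = ∫⁻ p in polarCoord.target, ENNReal.ofReal p.1 * ‖g (Complex.polarCoord.symm p)‖ₑ := by
        rw [polarCoord_target, Measure.volume_eq_prod, ← Measure.prod_restrict,
          lintegral_prod _ hmeas.aemeasurable]
    _ = ∫⁻ z, ‖g z‖ₑ := Complex.lintegral_comp_polarCoord_symm fun z => ‖g z‖ₑ

theorem Differentiable.eq_zero_of_integrable {g : ℂ → E} (hg : Differentiable ℂ g)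
    (hi : Integrable g) : g = 0 := by
  funext z
  by_contra hz
  have hshift : Differentiable ℂ fun w => g (w + z) := hg.comp (differentiable_id.add_const z)
  exact (hi.comp_add_right z).hasFiniteIntegral.ne
    (hshift.lintegral_enorm_eq_top (by simpa using hz))

end IntegrableEntire

theorem stmt11 :
    ¬ ∃ v : E2 → ℝ, ContDiff ℝ 2 v ∧ (∀ x : E2, laplacian2 v x = 0) ∧
      Integrable (fun x : E2 => Real.exp (v x)) := by
  rintro ⟨v, hv, hharm, hint⟩
  set e : ℂ ≃ₗᵢ[ℝ] E2 := Complex.orthonormalBasisOneI.repr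
  have harmonic : HarmonicOnNhd (v ∘ e) univ := fun z _ =>
    ⟨(hv.comp e.contDiff).contDiffAt, Filter.Eventually.of_forall fun w => by
      rw [laplacian_comp_linearIsometryEquiv, Function.comp_apply, ← laplacian2_eq_laplacian hv,
        hharm, Pi.zero_apply]⟩
  obtain ⟨F, hF, hFre⟩ := harmonic.exists_analyticOnNhd_univ_re_eq
  have hFdiff : Differentiable ℂ fun z => Complex.exp (F z) :=
    (differentiableOn_univ.1 hF.differentiableOn).cexp
  have hexp : Integrable fun z => Complex.exp (F z) := by
    refine (integrable_norm_iff hFdiff.continuous.aestronglyMeasurable).1 ?_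
    simp_rw [Complex.norm_exp, congrFun hFre]
    exact e.measurePreserving.integrable_comp_of_integrable hint
  exact Complex.exp_ne_zero (F 0) (congrFun (hFdiff.eq_zero_of_integrable hexp) 0)
end
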